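/- Let F = 𝔽_{2^m}, let S ⊆ F with 0 ∉ S, let b, c, d ∈ F with b ≠ 0, and let S' = b⁻¹S = {b⁻¹z : z ∈ S}. Then for every t > 0, the cubelike graph Cay(F, S) has PEST from the edge (0, b) to the edge (c, d) at time t if and only if the cubelike graph Cay(F, S') has PEST from the edge (0, 1) to the edge (b⁻¹c, b⁻¹d) at time t. -/

import Mathlib

open Matrix Finset

noncomputable section

noncomputable instance (m : ℕ) : Fintype (GaloisField 2 m) := Fintype.ofFinite _
noncomputable instance (m : ℕ) : DecidableEq (GaloisField 2 m) := Classical.decEq _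

/-- The absolute trace map `Tr : 𝔽_{2^m} → 𝔽₂`. -/
def Ftr {m : ℕ} (x : GaloisField 2 m) : ZMod 2 :=
  Algebra.trace (ZMod 2) (GaloisField 2 m) x

/-- The adjacency matrix of the Cayley (cubelike) graph `Cay(G, S)`. -/
def adjMatrix {G : Type*} [AddCommGroup G] [Fintype G] [DecidableEq G]
    (S : Finset G) : Matrix G G ℂ :=
  fun u v => if u + v ∈ S then 1 else 0

/-- The transfer matrix `H(t) = exp(i t A)`. -/
def transferMatrix {G : Type*} [AddCommGroup G] [Fintype G] [DecidableEq G]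
    (S : Finset G) (t : ℝ) : Matrix G G ℂ :=
  NormedSpace.exp (Complex.I • ((t : ℂ) • adjMatrix S))

/-- The standard basis vector `e_a` of `ℂ^V`. -/
def stdBasis {G : Type*} [DecidableEq G] (a : G) : G → ℂ :=
  fun v => if v = a then 1 else 0

/-- Perfect edge state transfer from the edge `(a,b)` to the edge `(c,d)` at time `t`:
`|(1/2)(e_c - e_d)ᵀ H(t)(e_a - e_b)|² = 1`. -/
def hasPEST {G : Type*} [AddCommGroup G] [Fintype G] [DecidableEq G]
    (S : Finset G) (a b c d : G) (t : ℝ) : Prop :=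
  ‖(1 / 2 : ℂ) * dotProduct (stdBasis c - stdBasis d)
      (transferMatrix S t *ᵥ (stdBasis a - stdBasis b))‖ ^ 2 = 1

/-- The eigenvalue `λ_x = ∑_{s ∈ S} (-1)^{Tr(xs)}` of a cubelike graph on `𝔽_{2^m}`. -/
def lamF {m : ℕ} (S : Finset (GaloisField 2 m)) (x : GaloisField 2 m) : ℤ :=
  ∑ s ∈ S, (-1) ^ (Ftr (x * s)).val

/-!
Multiplication by `b ≠ 0` is an additive automorphism of `𝔽_{2^m}` carrying `b⁻¹S` onto `S`,
hence a graph isomorphism `Cay(F, b⁻¹S) ≅ Cay(F, S)` sending the edges `(0, 1)` and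
`(b⁻¹c, b⁻¹d)` to `(0, b)` and `(c, d)`. Relabelling the vertices conjugates the adjacency
matrix, and hence its exponential, by a permutation, so transfer amplitudes are preserved.
-/

open NormedSpace

theorem Matrix.exp_reindex {m n 𝔸 : Type*} [Fintype m] [DecidableEq m] [Fintype n]
    [DecidableEq n] [Ring 𝔸] [TopologicalSpace 𝔸] [IsTopologicalRing 𝔸] [T2Space 𝔸]
    [Algebra ℚ 𝔸] (e : m ≃ n) (A : Matrix m m 𝔸) :
    exp (reindex e e A) = reindex e e (exp A) := by
  let φ := reindexAlgEquiv ℚ 𝔸 e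
  change exp (φ A) = φ (exp A)
  simp only [exp_eq_tsum_rat, ← map_pow, ← map_smul]
  exact (Function.LeftInverse.map_tsum (g := φ) _ (continuous_id.matrix_reindex e e)
    (continuous_id.matrix_reindex e.symm e.symm) φ.symm_apply_apply).symm

theorem stdBasis_eq_single {G : Type*} [DecidableEq G] (a : G) :
    _root_.stdBasis a = Pi.single a 1 := by
  ext v
  simp [_root_.stdBasis, Pi.single_apply]

theorem stdBasis_sub_dotProduct_mulVec_stdBasis_sub {G : Type*} [Fintype G] [DecidableEq G]
    (M : Matrix G G ℂ) (a b c d : G) :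
    (_root_.stdBasis c - _root_.stdBasis d) ⬝ᵥ (M *ᵥ (_root_.stdBasis a - _root_.stdBasis b)) =
      M c a - M c b - M d a + M d b := by
  simp only [_root_.stdBasis_eq_single, mulVec_sub, sub_dotProduct, dotProduct_sub,
    mulVec_single_one, single_one_dotProduct, col_apply]
  ring

section AddEquiv

variable {G H : Type*} [AddCommGroup G] [Fintype G] [DecidableEq G]
  [AddCommGroup H] [Fintype H] [DecidableEq H]

theorem adjMatrix_image_addEquiv_symm (e : G ≃+ H) (S : Finset H) :
    adjMatrix (S.image e.symm) = reindex e.toEquiv.symm e.toEquiv.symm (adjMatrix S) := by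
  ext u v
  simp [adjMatrix, AddEquiv.symm_apply_eq]

theorem transferMatrix_image_addEquiv_symm (e : G ≃+ H) (S : Finset H) (t : ℝ) :
    transferMatrix (S.image e.symm) t =
      reindex e.toEquiv.symm e.toEquiv.symm (transferMatrix S t) := by
  rw [transferMatrix, transferMatrix, adjMatrix_image_addEquiv_symm, ← exp_reindex]
  rfl

theorem hasPEST_image_addEquiv_symm_iff (e : G ≃+ H) (S : Finset H) (a b c d : G) (t : ℝ) :
    hasPEST (S.image e.symm) a b c d t ↔ hasPEST S (e a) (e b) (e c) (e d) t := by
  simp only [hasPEST, transferMatrix_image_addEquiv_symm,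
    stdBasis_sub_dotProduct_mulVec_stdBasis_sub, reindex_apply, submatrix_apply,
    Equiv.symm_symm, AddEquiv.toEquiv_eq_coe, AddEquiv.coe_toEquiv]

end AddEquiv

theorem hasPEST_scale_iff_general {m : ℕ}
    (S : Finset (GaloisField 2 m))
    (b c d : GaloisField 2 m) (hb : b ≠ 0) (t : ℝ) :
    hasPEST S 0 b c d t ↔
      hasPEST (S.image (fun z => b⁻¹ * z)) 0 1 (b⁻¹ * c) (b⁻¹ * d) t := by
  let e := DistribMulAction.toAddEquiv₀ (GaloisField 2 m) b hb
  have he : ∀ x, e x = b * x := fun _ => rfl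
  rw [show (fun z => b⁻¹ * z) = e.symm from rfl, hasPEST_image_addEquiv_symm_iff]
  simp only [he, mul_zero, mul_one, mul_inv_cancel_left₀ hb]

/-- `Cay(𝔽_{2^m}, S)` has PEST from `(0,b)` to `(c,d)` at time `t` iff `Cay(𝔽_{2^m}, b⁻¹S)`
has PEST from `(0,1)` to `(b⁻¹c, b⁻¹d)` at time `t` (Lemma 2). -/
theorem hasPEST_scale_iff {m : ℕ} (hm : 1 ≤ m)
    (S : Finset (GaloisField 2 m)) (h0 : (0 : GaloisField 2 m) ∉ S)
    (b c d : GaloisField 2 m) (hb : b ≠ 0) (t : ℝ) (ht : 0 < t) :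
    hasPEST S 0 b c d t ↔
      hasPEST (S.image (fun z => b⁻¹ * z)) 0 1 (b⁻¹ * c) (b⁻¹ * d) t :=
  hasPEST_scale_iff_general S b c d hb t

end
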